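/- Let (M, π) be a Poisson manifold, V_π a Poisson spray with flow φ_t, ∇ a torsion-free classical connection on TM, and a(t) = φ_t(ξ) a cotangent path with base γ. If V is a horizontal tangent vector field along a (with respect to ∇) with projection V̄ = (dp)(V) along γ, then dp(L_{V_π}(V)) = ∇̄_a(V̄), where ∇̄ is the contravariant connection on TM induced by ∇ and L_{V_π}(V)(t) = d/ds|_{s=0} (dφ_{−s})_{a(s+t)}(V(s+t)). Consequently, for an arbitrary tangent vector field V along a with components (V̄, θ_V), dp(L_{V_π}(V)) = −π♯(θ_V) + ∇̄_a(V̄). -/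

import Mathlib

/-!
Formalization framework for "On the existence of symplectic realizations"
(Crainic–Mărcuț).  We work on a chart: the Poisson manifold is an open set
`U ⊆ ℝⁿ` (with `Vec n := Fin n → ℝ`), its cotangent bundle is
`T*U = U × ℝⁿ ⊆ Pt n := Vec n × Vec n`, with bundle projection `Prod.fst`.
A bivector field is given by its components `Pb x p q = π_{pq}(x)`, a classical
connection on `TM` by its Christoffel symbols `Γ x p q r = Γ_{pq}^r(x)`.
-/

noncomputable section
open Set

namespace PoissonPaper

abbrev Vec (n : ℕ) := Fin n → ℝ
abbrev Pt (n : ℕ) := Vec n × Vec n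

variable {n : ℕ}

/-- Partial derivative `∂_l f (x)`. -/
def pd (l : Fin n) (f : Vec n → ℝ) (x : Vec n) : ℝ :=
  fderiv ℝ f x (Pi.single l 1)

/-- The bundle map `π♯ : T*M → TM`, `β(π♯ α) = π(α, β)`;
in components `(π♯ ξ)_q = ∑_p π_{pq} ξ_p`. -/
def sharp (Pb : Vec n → Fin n → Fin n → ℝ) (x ξ : Vec n) : Vec n :=
  fun q => ∑ p, Pb x p q * ξ p

/-- The Jacobiator of the bivector `Pb` on the coordinate functions:
`{{x_j,x_k},x_i} + {{x_k,x_i},x_j} + {{x_i,x_j},x_k}`; `π` is Poisson iff it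
vanishes. -/
def jacobiator (Pb : Vec n → Fin n → Fin n → ℝ) (x : Vec n) (i j k : Fin n) : ℝ :=
  ∑ l, (Pb x l i * pd l (fun y => Pb y j k) x
      + Pb x l j * pd l (fun y => Pb y k i) x
      + Pb x l k * pd l (fun y => Pb y i j) x)

/-- Components of the Schouten bracket `[π, π]` (with the convention
`[π,π](df,dg,dh) = 2({f,{g,h}} + {g,{h,f}} + {h,{f,g}})`). -/
def schouten (Pb : Vec n → Fin n → Fin n → ℝ) (x : Vec n) (i j k : Fin n) : ℝ :=
  -(2 * jacobiator Pb x i j k)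

/-- `Pb` is a smooth bivector field (an antisymmetric 2-tensor) on `U`. -/
def IsBivectorOn (U : Set (Vec n)) (Pb : Vec n → Fin n → Fin n → ℝ) : Prop :=
  (∀ p q, ContDiffOn ℝ (⊤ : ℕ∞) (fun x => Pb x p q) U) ∧
  (∀ x ∈ U, ∀ p q, Pb x q p = - Pb x p q)

/-- `Pb` is a Poisson bivector on `U` : a bivector with `[π,π] = 0`
(the Jacobi identity). -/
def IsPoissonOn (U : Set (Vec n)) (Pb : Vec n → Fin n → Fin n → ℝ) : Prop :=
  IsBivectorOn U Pb ∧ ∀ x ∈ U, ∀ i j k, jacobiator Pb x i j k = 0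

/-- A Poisson spray for `(U, π)`: a (smooth) vector field `V` on `T*U = U × ℝⁿ`
such that `(dp)_ξ(V_ξ) = π♯(ξ)` and `m_t^*(V) = t V` for all `t > 0`
(the latter written as `(dm_t)(t • V_ξ) = V(m_t ξ)`, where `m_t(x,y) = (x,t•y)`
and `dm_t(v,θ) = (v, t•θ)`). -/
structure IsSpray (U : Set (Vec n)) (Pb : Vec n → Fin n → Fin n → ℝ)
    (V : Pt n → Pt n) : Prop where
  smooth : ContDiffOn ℝ (⊤ : ℕ∞) V (U ×ˢ (univ : Set (Vec n)))
  base : ∀ ξ : Pt n, ξ.1 ∈ U → (V ξ).1 = sharp Pb ξ.1 ξ.2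
  homog : ∀ t : ℝ, 0 < t → ∀ ξ : Pt n, ξ.1 ∈ U →
    V (ξ.1, t • ξ.2) = (t • (V ξ).1, t • t • (V ξ).2)

/-- A local flow `φ` of the vector field `V` on `T*U = U × ℝⁿ ⊆ Pt n`, with
open domain `D ⊆ ℝ × Pt n`. -/
structure IsLocalFlow (U : Set (Vec n)) (V : Pt n → Pt n)
    (D : Set (ℝ × Pt n)) (φ : ℝ → Pt n → Pt n) : Prop where
  isOpen_dom : IsOpen D
  mem_zero : ∀ ξ : Pt n, ξ.1 ∈ U → ((0 : ℝ), ξ) ∈ D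
  init : ∀ ξ : Pt n, φ 0 ξ = ξ
  interval : ∀ (t : ℝ) (ξ : Pt n), (t, ξ) ∈ D → ∀ s ∈ uIcc (0:ℝ) t, (s, ξ) ∈ D
  invariant : ∀ (t : ℝ) (ξ : Pt n), (t, ξ) ∈ D → (φ t ξ).1 ∈ U
  hasDeriv : ∀ (t : ℝ) (ξ : Pt n), (t, ξ) ∈ D →
    HasDerivAt (fun s => φ s ξ) (V (φ t ξ)) t
  group : ∀ (s t : ℝ) (ξ : Pt n), (t, ξ) ∈ D → (s, φ t ξ) ∈ D →
    (s + t, ξ) ∈ D ∧ φ s (φ t ξ) = φ (s + t) ξ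

/-- The canonical symplectic form `ω_can = ∑ dx_i ∧ dy_i` of `T*ℝⁿ = ℝⁿ × ℝⁿ`
(constant coefficients): `ω_can(v, w) = ⟨θ_w, v̄⟩ - ⟨θ_v, w̄⟩`. -/
def omegaCan (v w : Pt n) : ℝ := ∑ i, (w.2 i * v.1 i - v.2 i * w.1 i)

/-- The 2-form `ω := ∫₀¹ (φ_t)^* ω_can dt`. -/
def omegaInt (φ : ℝ → Pt n → Pt n) (ξ v w : Pt n) : ℝ :=
  ∫ t in (0:ℝ)..1, omegaCan (fderiv ℝ (φ t) ξ v) (fderiv ℝ (φ t) ξ w)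

/-- Nondegeneracy of a 2-form at a point. -/
def Nondeg (ω : Pt n → Pt n → Pt n → ℝ) (ξ : Pt n) : Prop :=
  ∀ v : Pt n, (∀ w : Pt n, ω ξ v w = 0) → v = 0

/-- Closedness of a 2-form on `S` (`dω = 0`, expressed on constant vector
fields). -/
def ClosedOn (S : Set (Pt n)) (ω : Pt n → Pt n → Pt n → ℝ) : Prop :=
  ∀ ξ ∈ S, ∀ u v w : Pt n,
    fderiv ℝ (fun η => ω η v w) ξ u - fderiv ℝ (fun η => ω η u w) ξ v
      + fderiv ℝ (fun η => ω η u v) ξ w = 0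

/-- `ω` is a symplectic form on `S`: a smooth, bilinear, antisymmetric,
closed, nondegenerate 2-form. -/
def IsSymplecticOn (S : Set (Pt n)) (ω : Pt n → Pt n → Pt n → ℝ) : Prop :=
  (∀ ξ ∈ S, ∀ v w : Pt n, ω ξ w v = - ω ξ v w) ∧
  (∀ ξ ∈ S, ∀ (a b : ℝ) (v v' w : Pt n),
      ω ξ (a • v + b • v') w = a * ω ξ v w + b * ω ξ v' w) ∧
  (∀ v w : Pt n, ContDiffOn ℝ (⊤ : ℕ∞) (fun ξ => ω ξ v w) S) ∧
  ClosedOn S ω ∧ (∀ ξ ∈ S, Nondeg ω ξ)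

/-- The projection `p = Prod.fst : (S, ω) → (U, π)` is a Poisson map: for each
`ξ ∈ S` and `θ ∈ T*_{p(ξ)}M`, any `v` with `i_v ω = p^*θ` at `ξ` satisfies
`(dp)_ξ(v) = π♯(θ)`; i.e. the bivector inverse to `ω` pushes forward to `π`. -/
def FstIsPoissonMap (S : Set (Pt n)) (Pb : Vec n → Fin n → Fin n → ℝ)
    (ω : Pt n → Pt n → Pt n → ℝ) : Prop :=
  ∀ ξ ∈ S, ∀ θ : Vec n, ∀ v : Pt n,
    (∀ w : Pt n, ω ξ v w = ∑ i, θ i * w.1 i) → v.1 = sharp Pb ξ.1 θ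

/-- Lie bracket of vector fields on `ℝⁿ` (in components). -/
def lieVF (X Y : Vec n → Vec n) (x : Vec n) : Vec n :=
  fun q => ∑ p, (X x p * pd p (fun y => Y y q) x - Y x p * pd p (fun y => X y q) x)

/-- Lie derivative of a 1-form `β` along a vector field `X` (in components):
`(L_X β)_r = ∑_p (X_p ∂_p β_r + β_p ∂_r X_p)`. -/
def lieDer1 (X β : Vec n → Vec n) (x : Vec n) : Vec n :=
  fun r => ∑ p, (X x p * pd p (fun y => β y r) x + β x p * pd r (fun y => X y p) x)

/-- The pairing `π(α, β)`. -/
def pbPair (Pb : Vec n → Fin n → Fin n → ℝ) (α β : Vec n → Vec n) (x : Vec n) : ℝ :=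
  ∑ p, ∑ q, Pb x p q * α x p * β x q

/-- The Koszul bracket `[α, β]_π = L_{π♯α} β − L_{π♯β} α − d(π(α,β))` on
1-forms. -/
def koszul (Pb : Vec n → Fin n → Fin n → ℝ) (α β : Vec n → Vec n) (x : Vec n) :
    Vec n :=
  fun r => lieDer1 (fun y => sharp Pb y (α y)) β x r
         - lieDer1 (fun y => sharp Pb y (β y)) α x r
         - pd r (pbPair Pb α β) x

/-- The Lie derivative `L_{π♯α}(f)` of a function along `π♯α`. -/
def LDer (Pb : Vec n → Fin n → Fin n → ℝ) (α : Vec n → Vec n) (f : Vec n → ℝ)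
    (x : Vec n) : ℝ :=
  ∑ q, sharp Pb x (α x) q * pd q f x

/-- Classical covariant derivative of a 1-form `α` along a vector field `X`,
for the connection dual to the one on `TM` with Christoffel symbols `Γ`:
`(∇_X α)_q = ∑_p X_p ∂_p α_q − ∑_{p,r} Γ_{pq}^r X_p α_r`. -/
def covD1 (Γ : Vec n → Fin n → Fin n → Fin n → ℝ) (X α : Vec n → Vec n)
    (x : Vec n) : Vec n :=
  fun q => (∑ p, X x p * pd p (fun y => α y q) x)
         - ∑ p, ∑ r, Γ x p q r * X x p * α x r

/-- The contravariant connection `∇̄` on `TM` induced by a classical connection: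
`∇̄_α(V) = π♯(∇_V α) + [π♯α, V]`. -/
def nbarVF (Pb : Vec n → Fin n → Fin n → ℝ)
    (Γ : Vec n → Fin n → Fin n → Fin n → ℝ)
    (α X : Vec n → Vec n) (x : Vec n) : Vec n :=
  fun s => (∑ q, Pb x q s * covD1 Γ X α x q)
         + lieVF (fun y => sharp Pb y (α y)) X x s

/-- The contravariant connection `∇̄` on `T*M` induced by a classical
connection: `∇̄_α(β) = ∇_{π♯β}(α) + [α, β]_π`. -/
def nbar1F (Pb : Vec n → Fin n → Fin n → ℝ)
    (Γ : Vec n → Fin n → Fin n → Fin n → ℝ)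
    (α β : Vec n → Vec n) (x : Vec n) : Vec n :=
  fun r => covD1 Γ (fun y => sharp Pb y (β y)) α x r + koszul Pb α β x r

/-- Connection coefficients of `∇̄` on `TM`: `(∇̄_{dx_p} ∂_q)^r`. -/
def GbarTM (Pb : Vec n → Fin n → Fin n → ℝ)
    (Γ : Vec n → Fin n → Fin n → Fin n → ℝ) (x : Vec n) (p q r : Fin n) : ℝ :=
  -(∑ s, Pb x s r * Γ x q s p) - pd q (fun y => Pb y p r) x

/-- Connection coefficients of `∇̄` on `T*M`: `(∇̄_{dx_p} dx_q)_r`. -/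
def GbarT1 (Pb : Vec n → Fin n → Fin n → ℝ)
    (Γ : Vec n → Fin n → Fin n → Fin n → ℝ) (x : Vec n) (p q r : Fin n) : ℝ :=
  pd r (fun y => Pb y p q) x - ∑ s, Pb x q s * Γ x s r p

/-- Connection coefficients of the contravariant connection `∇_α := ∇_{π♯α}`
on `T*M`: `(∇_{π♯ dx_p} dx_q)_r`. -/
def Gplain (Pb : Vec n → Fin n → Fin n → ℝ)
    (Γ : Vec n → Fin n → Fin n → Fin n → ℝ) (x : Vec n) (p q r : Fin n) : ℝ :=
  -(∑ s, Pb x p s * Γ x s r q)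

/-- Derivative of a path `u` (of tangent or cotangent vectors) along a
cotangent path with covector components `a` over base path `γ`, for a
contravariant connection with coefficients `G` (so `(∇_a u)_r = u̇_r +
∑_{p,q} a_p u_q G_{pq}^r`). -/
def covAlong (G : Vec n → Fin n → Fin n → Fin n → ℝ) (a γ : ℝ → Vec n)
    (u : ℝ → Vec n) (t : ℝ) : Vec n :=
  fun r => deriv (fun s => u s r) t + ∑ p, ∑ q, a t p * u t q * G (γ t) p q r

/-- Vertical component `θ_v = v − hor_ξ(v̄)` of a tangent vector
`v ∈ T_ξ(T*M)` with respect to the classical connection `Γ`. -/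
def vert (Γ : Vec n → Fin n → Fin n → Fin n → ℝ) (ξ v : Pt n) : Vec n :=
  fun q => v.2 q - ∑ p, ∑ r, Γ ξ.1 p q r * v.1 p * ξ.2 r

/-- The horizontal subspace `H_ξ ⊆ T_ξ(T*M)` of the classical connection `Γ`. -/
def Hor (Γ : Vec n → Fin n → Fin n → Fin n → ℝ) (ξ : Pt n) : Set (Pt n) :=
  {u : Pt n | ∀ q, u.2 q = ∑ p, ∑ r, Γ ξ.1 p q r * u.1 p * ξ.2 r}

/-- A contravariant connection on `T*M` over the Poisson manifold `(U, π)`: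
a bilinear operation `(α, β) ↦ ∇_α β` on 1-forms, function-linear in `α` and
satisfying the Leibniz rule `∇_α(fβ) = f ∇_α β + L_{π♯α}(f) β`. -/
structure IsContraConn (U : Set (Vec n)) (Pb : Vec n → Fin n → Fin n → ℝ)
    (C : (Vec n → Vec n) → (Vec n → Vec n) → (Vec n → Vec n)) : Prop where
  addLeft : ∀ (α α' β : Vec n → Vec n), ∀ x ∈ U,
    C (α + α') β x = C α β x + C α' β x
  addRight : ∀ (α β β' : Vec n → Vec n), ∀ x ∈ U,
    C α (β + β') x = C α β x + C α β' x
  smulLeft : ∀ f : Vec n → ℝ, ContDiffOn ℝ (⊤ : ℕ∞) f U →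
    ∀ (α β : Vec n → Vec n), ∀ x ∈ U,
      C (fun y => f y • α y) β x = f x • C α β x
  leibniz : ∀ f : Vec n → ℝ, ContDiffOn ℝ (⊤ : ℕ∞) f U →
    ∀ (α β : Vec n → Vec n), ∀ x ∈ U,
      C α (fun y => f y • β y) x = f x • C α β x + LDer Pb α f x • β x

/-- Christoffel symbols of a contravariant connection:
`∇_{dx_p}(dx_q) = ∑_r Γ_{pq}^r dx_r`. -/
def christ (C : (Vec n → Vec n) → (Vec n → Vec n) → (Vec n → Vec n))
    (x : Vec n) (p q r : Fin n) : ℝ :=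
  C (fun _ => Pi.single p 1) (fun _ => Pi.single q 1) x r

/-- A smooth 1-form on `U` (in components). -/
def Smooth1F (U : Set (Vec n)) (α : Vec n → Vec n) : Prop :=
  ∀ q, ContDiffOn ℝ (⊤ : ℕ∞) (fun x => α x q) U

/-- The pairing `g(α, β)` of a fiber metric on `T*M` with 1-forms. -/
def gPair (g : Vec n → Fin n → Fin n → ℝ) (α β : Vec n → Vec n) (x : Vec n) : ℝ :=
  ∑ p, ∑ q, g x p q * α x p * β x q

/-!
Write `c = a(t)`. Differentiating the flow in space along a trajectory (the variational equation,
solved by Picard–Lindelöf and controlled by Grönwall) shows that `(dφ_{-s})_{φ_s c}` is the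
inverse of the solution of `M' = (dV)_{φ_s c} M`, `M 0 = 1`; hence
`L_{V_π}(W)(t) = Ẇ(t) - (dV)_c (W t)`. As `p ∘ V_π = π♯` near `c`, the base part of `(dV)_c w` is
`π♯(w.2) + (∂π)(w̄, c.2)`. Writing `w.2 = θ_w + horLift Γ c w̄`, the term `π♯(horLift Γ c w̄)` is
exactly the `Γ`-part of the coefficients of `∇̄` along `a`, so it cancels, leaving
`dp(L_{V_π}(W)) = −π♯(θ_W) + ∇̄_a(W̄)`; for horizontal `W`, `θ_W = 0`.
-/

open Metric Filter Topology

section FlowDerivative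

variable {E F : Type*} [NormedAddCommGroup E] [NormedSpace ℝ E]
  [NormedAddCommGroup F] [NormedSpace ℝ F]

lemma neg_mem_uIcc_zero_neg_iff {σ r : ℝ} : -σ ∈ uIcc 0 (-r) ↔ σ ∈ uIcc 0 r := by
  rw [← neg_zero, ← image_neg_uIcc, neg_injective.mem_set_image, neg_zero]

lemma abs_le_abs_of_mem_uIcc_zero {σ r : ℝ} (h : σ ∈ uIcc 0 r) : |σ| ≤ |r| := by
  simpa using abs_sub_left_of_mem_uIcc h

lemma add_mem_uIcc_of_mem_uIcc_zero_neg {σ s : ℝ} (hσ : σ ∈ uIcc 0 (-s)) : σ + s ∈ uIcc s 0 := by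
  simpa using mem_image_of_mem (· + s) hσ

lemma hasDerivAt_comp_neg {g : ℝ → E} {g' : E} {σ : ℝ} (h : HasDerivAt g g' (-σ)) :
    HasDerivAt (fun τ => g (-τ)) (-g') σ := by
  simpa using HasDerivAt.comp_const_sub 0 σ (by simpa using h)

lemma gronwallBound_zero_eq_mul (K ε x : ℝ) :
    gronwallBound 0 K ε x = ε * gronwallBound 0 K 1 x := by
  by_cases hK : K = 0
  · simp [gronwallBound_K0, hK]
  · simp only [gronwallBound_of_K_ne_0 hK]
    ring

lemma exists_nnnorm_le_of_isCompact {α F : Type*} [TopologicalSpace α]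
    [SeminormedAddCommGroup F] {f' : α → F} {K : Set α} (hKc : IsCompact K)
    (hf' : ContinuousOn f' K) : ∃ L : NNReal, ∀ x ∈ K, ‖f' x‖₊ ≤ L := by
  obtain ⟨C, hC⟩ := hKc.exists_bound_of_continuousOn hf'
  refine ⟨C.toNNReal, fun x hx => ?_⟩
  rw [← NNReal.coe_le_coe, coe_nnnorm]
  exact (hC x hx).trans (Real.le_coe_toNNReal C)

lemma exists_pos_short_time_of_continuousAt {Y : Type*} [PseudoMetricSpace Y] {γ : ℝ → Y}
    (hγ : ContinuousAt γ 0) {ε₁ C ρ : ℝ}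
    (hε₁ : 0 < ε₁) (hρ : 0 < ρ) :
    ∃ ε > 0, ∀ σ, |σ| < ε → |σ| < ε₁ ∧ C * |σ| ≤ ρ ∧ dist (γ σ) (γ 0) ≤ ρ := by
  have hshort : ∀ᶠ σ in 𝓝 (0 : ℝ), |σ| < ε₁ ∧ C * |σ| ≤ ρ ∧ dist (γ σ) (γ 0) ≤ ρ :=
    ((continuous_abs.tendsto' 0 0 abs_zero).eventually (gt_mem_nhds hε₁)).and
      ((((continuous_const.mul continuous_abs).tendsto' 0 0 (by simp)).eventually
        (ge_mem_nhds hρ)).and ((hγ.dist continuousAt_const).eventually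
          (ge_mem_nhds (by simpa using hρ))))
  obtain ⟨ε, hε, h⟩ := Metric.eventually_nhds_iff_ball.1 hshort
  exact ⟨ε, hε, fun σ hσ => h σ (by simpa using hσ)⟩

lemma mem_closedBall_of_norm_deriv_lt {g g' : ℝ → E} {c : E} {δ C ρ r : ℝ} (hC₀ : 0 ≤ C)
    (hg : ∀ σ ∈ uIcc 0 r, HasDerivAt g (g' σ) σ) (hg0 : g 0 ∈ closedBall c δ)
    (hC : ∀ σ ∈ uIcc 0 r, g σ ∈ closedBall c ρ → ‖g' σ‖ < C) (hsmall : δ + C * |r| ≤ ρ) :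
    ∀ σ ∈ uIcc 0 r, g σ ∈ closedBall c ρ := by
  wlog hr : 0 ≤ r generalizing g g' r
  · intro σ hσ
    simpa using this (g := fun τ => g (-τ)) (g' := fun τ => -g' (-τ)) (r := -r)
      (fun τ hτ => hasDerivAt_comp_neg (hg _ (neg_mem_uIcc_zero_neg_iff.1 (by simpa using hτ))))
      (by simpa using hg0)
      (fun τ hτ hmem => by simpa using hC _ (neg_mem_uIcc_zero_neg_iff.1 (by simpa using hτ)) hmem)
      (by simpa using hsmall) (by linarith) (-σ) (neg_mem_uIcc_zero_neg_iff.2 hσ)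
  rw [uIcc_of_le hr] at hg hC ⊢
  rw [abs_of_nonneg hr] at hsmall
  have hbound : ∀ σ ∈ Icc 0 r, δ + C * σ ≤ ρ := fun σ hσ => by nlinarith [hσ.2]
  have key := image_norm_le_of_norm_deriv_right_lt_deriv_boundary (f := fun σ => g σ - c)
    (fun σ hσ => ((hg σ hσ).sub_const c).continuousAt.continuousWithinAt)
    (fun σ hσ => ((hg σ (Ico_subset_Icc_self hσ)).sub_const c).hasDerivWithinAt)
    (B := fun σ => δ + C * σ) (by simpa [dist_eq_norm] using hg0)
    (fun σ => by simpa using ((hasDerivAt_id σ).const_mul C).const_add δ)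
    (fun σ hσ heq => hC σ (Ico_subset_Icc_self hσ) <| by
      rw [mem_closedBall, dist_eq_norm, heq]; exact hbound σ (Ico_subset_Icc_self hσ))
  intro σ hσ
  rw [mem_closedBall, dist_eq_norm]
  exact (key hσ).trans (hbound σ hσ)

lemma exists_norm_sub_sub_fderiv_le {f : E → F} {f' : E → E →L[ℝ] F} {K : Set E}
    (hKc : IsCompact K) (hKv : Convex ℝ K) (hf : ∀ x ∈ K, HasFDerivAt f (f' x) x)
    (hf' : ContinuousOn f' K) {κ : ℝ} (hκ : 0 < κ) :
    ∃ η > 0, ∀ x ∈ K, ∀ y ∈ K, ‖y - x‖ ≤ η → ‖f y - f x - f' x (y - x)‖ ≤ κ * ‖y - x‖ := by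
  obtain ⟨η, hη, hclose⟩ :=
    uniformContinuousOn_iff_le.1 (hKc.uniformContinuousOn_of_continuous hf') κ hκ
  refine ⟨η, hη, fun x hx y hy hxy => ?_⟩
  refine (hKv.inter (convex_closedBall x η)).norm_image_sub_le_of_norm_hasFDerivWithin_le'
    (fun w hw => (hf w hw.1).hasFDerivWithinAt) (fun w hw => ?_)
    ⟨hx, mem_closedBall_self hη.le⟩ ⟨hy, by rwa [mem_closedBall, dist_eq_norm]⟩
  rw [← dist_eq_norm]
  exact hclose w hw.1 x hx hw.2

lemma norm_sub_le_mul_exp_of_lipschitzOnWith {f : E → E} {K : Set E} {L : NNReal}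
    (hf : LipschitzOnWith L f K) {u v : ℝ → E} {r : ℝ}
    (hu : ∀ σ ∈ Icc 0 r, HasDerivAt u (f (u σ)) σ ∧ u σ ∈ K)
    (hv : ∀ σ ∈ Icc 0 r, HasDerivAt v (f (v σ)) σ ∧ v σ ∈ K) :
    ∀ σ ∈ Icc 0 r, ‖u σ - v σ‖ ≤ ‖u 0 - v 0‖ * Real.exp (L * σ) := by
  intro σ hσ
  simpa [dist_eq_norm] using dist_le_of_trajectories_ODE_of_mem (v := fun _ => f)
    (s := fun _ => K) (fun _ _ => hf) (fun τ hτ => (hu τ hτ).1.continuousAt.continuousWithinAt)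
    (fun τ hτ => (hu τ (Ico_subset_Icc_self hτ)).1.hasDerivWithinAt)
    (fun τ hτ => (hu τ (Ico_subset_Icc_self hτ)).2)
    (fun τ hτ => (hv τ hτ).1.continuousAt.continuousWithinAt)
    (fun τ hτ => (hv τ (Ico_subset_Icc_self hτ)).1.hasDerivWithinAt)
    (fun τ hτ => (hv τ (Ico_subset_Icc_self hτ)).2) le_rfl σ hσ

lemma norm_sub_sub_variational_le {f : E → E} {f' : E → E →L[ℝ] E} {u v : ℝ → E}
    {P : ℝ → E →L[ℝ] E} {r L δ : ℝ} (hr : 0 ≤ r)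
    (hu : ∀ σ ∈ Icc 0 r, HasDerivAt u (f (u σ)) σ) (hv : ∀ σ ∈ Icc 0 r, HasDerivAt v (f (v σ)) σ)
    (hP : ∀ σ ∈ Icc 0 r, HasDerivAt P (f' (v σ) * P σ) σ) (hP0 : P 0 = 1)
    (hL : ∀ σ ∈ Icc 0 r, ‖f' (v σ)‖ ≤ L)
    (hδ : ∀ σ ∈ Icc 0 r, ‖f (u σ) - f (v σ) - f' (v σ) (u σ - v σ)‖ ≤ δ) :
    ‖u r - v r - P r (u 0 - v 0)‖ ≤ gronwallBound 0 L δ r := by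
  set R : ℝ → E := fun σ => u σ - v σ - P σ (u 0 - v 0)
  have hR : ∀ σ ∈ Icc 0 r, HasDerivAt R
      (f (u σ) - f (v σ) - f' (v σ) (u σ - v σ) + f' (v σ) (R σ)) σ := by
    intro σ hσ
    refine (((hu σ hσ).sub (hv σ hσ)).sub
      ((hP σ hσ).clm_apply (hasDerivAt_const σ (u 0 - v 0)))).congr_deriv ?_
    simp only [R, map_sub, map_zero, add_zero]
    abel
  have := norm_le_gronwallBound_of_norm_deriv_right_le (f := R) (δ := 0) (K := L) (ε := δ)
    (fun σ hσ => (hR σ hσ).continuousAt.continuousWithinAt)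
    (fun σ hσ => (hR σ (Ico_subset_Icc_self hσ)).hasDerivWithinAt)
    (by simp [R, hP0])
    (fun σ hσ => by
      have hσ' := Ico_subset_Icc_self hσ
      calc _ ≤ _ + ‖f' (v σ) (R σ)‖ := norm_add_le _ _
        _ ≤ δ + L * ‖R σ‖ := add_le_add (hδ σ hσ')
            ((ContinuousLinearMap.le_opNorm _ _).trans (by gcongr; exact hL σ hσ'))
        _ = L * ‖R σ‖ + δ := add_comm _ _)
    r ⟨hr, le_rfl⟩
  rwa [sub_zero] at this

/-- Grönwall twice: nearby trajectories separate at most like `‖y - z‖ e^{L r}`, and the remainder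
`X σ y - X σ z - P σ (y - z)` obeys a linear differential inequality whose forcing term is
`o(‖y - z‖)` by the uniform continuity of `f'` on `K`. -/
theorem hasFDerivAt_of_variational_of_nonneg {f : E → E} {f' : E → E →L[ℝ] E} {K : Set E}
    (hKc : IsCompact K) (hKv : Convex ℝ K) (hf : ∀ x ∈ K, HasFDerivAt f (f' x) x)
    (hf' : ContinuousOn f' K) {X : ℝ → E → E} {z : E} {r : ℝ} (hr : 0 ≤ r)
    (hX : ∀ᶠ y in 𝓝 z, X 0 y = y ∧
      ∀ σ ∈ Icc 0 r, HasDerivAt (X · y) (f (X σ y)) σ ∧ X σ y ∈ K)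
    {P : ℝ → E →L[ℝ] E} (hP0 : P 0 = 1)
    (hP : ∀ σ ∈ Icc 0 r, HasDerivAt P (f' (X σ z) * P σ) σ) :
    HasFDerivAt (X r) (P r) z := by
  obtain ⟨L, hL⟩ := exists_nnnorm_le_of_isCompact hKc hf'
  have hlip : LipschitzOnWith L f K :=
    hKv.lipschitzOnWith_of_nnnorm_hasFDerivWithin_le (fun x hx => (hf x hx).hasFDerivWithinAt) hL
  have hz := hX.self_of_nhds
  refine HasFDerivAt.of_isLittleO (Asymptotics.isLittleO_iff.2 fun c hc => ?_)
  set B := Real.exp (L * r) * gronwallBound 0 L 1 r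
  have hB : 0 ≤ B := mul_nonneg (Real.exp_pos _).le
    (by simpa [gronwallBound_x0] using gronwallBound_mono le_rfl zero_le_one L.2 hr)
  obtain ⟨η, hη, htaylor⟩ :=
    exists_norm_sub_sub_fderiv_le hKc hKv hf hf' (κ := c / (B + 1)) (by positivity)
  have hnear : ∀ᶠ y in 𝓝 z, ‖y - z‖ * Real.exp (L * r) ≤ η :=
    ((by fun_prop : Continuous fun y => ‖y - z‖ * Real.exp (L * r)).tendsto' z 0
      (by simp)).eventually (ge_mem_nhds hη)
  filter_upwards [hX, hnear] with y hy hneary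
  have hsep (σ) (hσ : σ ∈ Icc 0 r) : ‖X σ y - X σ z‖ ≤ ‖y - z‖ * Real.exp (L * r) := by
    refine (norm_sub_le_mul_exp_of_lipschitzOnWith hlip hy.2 hz.2 σ hσ).trans ?_
    rw [hy.1, hz.1]
    gcongr
    exact hσ.2
  have := norm_sub_sub_variational_le hr (u := (X · y)) (v := (X · z)) (f := f)
    (fun σ hσ => (hy.2 σ hσ).1) (fun σ hσ => (hz.2 σ hσ).1) hP hP0 (L := L)
    (fun σ hσ => mod_cast hL _ (hz.2 σ hσ).2) (δ := c / (B + 1) * (‖y - z‖ * Real.exp (L * r)))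
    (fun σ hσ => (htaylor _ (hz.2 σ hσ).2 _ (hy.2 σ hσ).2 ((hsep σ hσ).trans hneary)).trans
      (by gcongr; exact hsep σ hσ))
  rw [hy.1, hz.1, gronwallBound_zero_eq_mul] at this
  calc ‖X r y - X r z - P r (y - z)‖ ≤ c / (B + 1) * B * ‖y - z‖ := this.trans_eq (by ring)
    _ ≤ c * ‖y - z‖ := by
      gcongr
      rw [div_mul_eq_mul_div, div_le_iff₀ (by positivity)]
      nlinarith

theorem hasFDerivAt_of_variational {f : E → E} {f' : E → E →L[ℝ] E} {K : Set E}
    (hKc : IsCompact K) (hKv : Convex ℝ K) (hf : ∀ x ∈ K, HasFDerivAt f (f' x) x)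
    (hf' : ContinuousOn f' K) {X : ℝ → E → E} {z : E} {r : ℝ}
    (hX : ∀ᶠ y in 𝓝 z, X 0 y = y ∧
      ∀ σ ∈ uIcc 0 r, HasDerivAt (X · y) (f (X σ y)) σ ∧ X σ y ∈ K)
    {P : ℝ → E →L[ℝ] E} (hP0 : P 0 = 1)
    (hP : ∀ σ ∈ uIcc 0 r, HasDerivAt P (f' (X σ z) * P σ) σ) :
    HasFDerivAt (X r) (P r) z := by
  rcases le_total 0 r with hr | hr
  · rw [uIcc_of_le hr] at hX hP
    exact hasFDerivAt_of_variational_of_nonneg hKc hKv hf hf' hr hX hP0 hP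
  have hmem {σ} (hσ : σ ∈ Icc 0 (-r)) : -σ ∈ uIcc 0 r :=
    neg_mem_uIcc_zero_neg_iff.1 (by simpa [uIcc_of_le (neg_nonneg.2 hr)] using hσ)
  simpa using hasFDerivAt_of_variational_of_nonneg (f := -f) (f' := -f')
    (X := fun σ => X (-σ)) (P := fun σ => P (-σ)) hKc hKv (fun x hx => (hf x hx).neg) hf'.neg
    (neg_nonneg.2 hr) (hX.mono fun y hy => ⟨by simpa using hy.1, fun σ hσ =>
      ⟨hasDerivAt_comp_neg (hy.2 _ (hmem hσ)).1, (hy.2 _ (hmem hσ)).2⟩⟩)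
    (by simpa using hP0) (fun σ hσ => by simpa [neg_mul] using hasDerivAt_comp_neg (hP _ (hmem hσ)))

lemma exists_hasDerivAt_eq_mul {R : Type*} [NormedRing R] [NormedAlgebra ℝ R] [CompleteSpace R]
    {A : ℝ → R} {ε : ℝ} (hε : 0 < ε) (hA : ContinuousOn A (Icc (-ε) ε)) :
    ∃ ε' ∈ Ioc 0 ε, ∃ M : ℝ → R, M 0 = 1 ∧ ∀ σ ∈ Ioo (-ε') ε', HasDerivAt M (A σ * M σ) σ := by
  obtain ⟨L, hL⟩ := exists_nnnorm_le_of_isCompact isCompact_Icc hA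
  set N : NNReal := L * (‖(1 : R)‖₊ + 1)
  set ε' := min ε (1 / (N + 1))
  have hε' : 0 < ε' := lt_min hε (by positivity)
  have hsub : Icc (-ε') ε' ⊆ Icc (-ε) ε := Icc_subset_Icc (by simp [ε']) (min_le_left _ _)
  have hPL : IsPicardLindelof (fun σ X => A σ * X) (⟨0, by simp [hε'.le]⟩ : Icc (-ε') ε')
      (1 : R) 1 0 N L := by
    refine ⟨fun σ hσ => LipschitzOnWith.of_dist_le_mul fun X _ Y _ => ?_,
      fun X _ => (hA.mono hsub).mul continuousOn_const, fun σ hσ X hX => ?_, ?_⟩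
    · rw [dist_eq_norm, dist_eq_norm, ← mul_sub]
      exact (norm_mul_le _ _).trans (by gcongr; exact_mod_cast hL σ (hsub hσ))
    · have hX1 : ‖X‖ ≤ ‖(1 : R)‖ + 1 := (norm_le_norm_add_norm_sub' X 1).trans
        (add_le_add_right (by simpa [dist_eq_norm] using hX) _)
      calc ‖A σ * X‖ ≤ ‖A σ‖ * ‖X‖ := norm_mul_le _ _
        _ ≤ L * (‖(1 : R)‖ + 1) := by gcongr; exact_mod_cast hL σ (hsub hσ)
        _ = N := by simp [N]
    · have : (N : ℝ) * ε' ≤ 1 := by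
        calc (N : ℝ) * ε' ≤ (N + 1) * (1 / (N + 1)) := by
              gcongr; · linarith
              exact min_le_right _ _
          _ = 1 := by field_simp
      simpa using this
  obtain ⟨M, hM0, hM⟩ := hPL.exists_eq_forall_mem_Icc_hasDerivWithinAt₀
  exact ⟨ε', ⟨hε', min_le_left _ _⟩, M, hM0, fun σ hσ =>
    (hM σ (Ioo_subset_Icc_self hσ)).hasDerivAt (Icc_mem_nhds hσ.1 hσ.2)⟩

lemma hasDerivAt_ringInverse_of_eq_one {R : Type*} [NormedRing R] [NormedAlgebra ℝ R]
    [CompleteSpace R] {M : ℝ → R} {A : R} (hM : HasDerivAt M A 0) (hM0 : M 0 = 1) :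
    HasDerivAt (fun s => Ring.inverse (M s)) (-A) 0 := by
  have hinv : HasFDerivAt Ring.inverse (-ContinuousLinearMap.mulLeftRight ℝ R 1 1) (M 0) := by
    simpa [hM0] using hasFDerivAt_ringInverse (𝕜 := ℝ) (1 : Rˣ)
  simpa [Function.comp_def] using hinv.comp_hasDerivAt (0 : ℝ) hM

/-- `σ ↦ M (σ + s) * (M s)⁻¹` solves the variational equation along the trajectory of `φ s c`
and equals `1` at `σ = 0`; at `σ = -s` it is `(M s)⁻¹`. -/
lemma hasFDerivAt_flow_neg {V : E → E} {K : Set E} (hKc : IsCompact K) (hKv : Convex ℝ K)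
    (hV : ∀ x ∈ K, HasFDerivAt V (fderiv ℝ V x) x) (hV' : ContinuousOn (fderiv ℝ V) K)
    {φ : ℝ → E → E} {c : E} {s : ℝ}
    (hφ : ∀ᶠ y in 𝓝 (φ s c), φ 0 y = y ∧
      ∀ σ ∈ uIcc 0 (-s), HasDerivAt (φ · y) (V (φ σ y)) σ ∧ φ σ y ∈ K)
    (hgroup : ∀ σ ∈ uIcc 0 (-s), φ σ (φ s c) = φ (σ + s) c)
    {M : ℝ → E →L[ℝ] E} (hM0 : M 0 = 1) (hMs : IsUnit (M s))
    (hM : ∀ σ ∈ uIcc s 0, HasDerivAt M (fderiv ℝ V (φ σ c) * M σ) σ) :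
    HasFDerivAt (φ (-s)) (Ring.inverse (M s)) (φ s c) := by
  have := hasFDerivAt_of_variational hKc hKv hV hV' hφ
    (P := fun σ => M (σ + s) * Ring.inverse (M s)) (by simpa using Ring.mul_inverse_cancel _ hMs)
    (fun σ hσ => by
      rw [hgroup σ hσ, ← mul_assoc]
      exact ((hM _ (add_mem_uIcc_of_mem_uIcc_zero_neg hσ)).comp_add_const σ s).mul_const _)
  simpa [hM0] using this

lemma eventually_flow_mem_closedBall {V : E → E} {φ : ℝ → E → E} {c : E} {ε₁ ρ C s : ℝ}
    (hinit : ∀ y, φ 0 y = y)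
    (hderiv : ∀ σ, |σ| < ε₁ → ∀ y ∈ closedBall c ρ, HasDerivAt (φ · y) (V (φ σ y)) σ)
    (hρ : 0 < ρ) (hC₀ : 0 ≤ C) (hC : ∀ x ∈ closedBall c ρ, ‖V x‖ < C)
    (hs : |s| < ε₁) (hCs : C * |s| ≤ ρ / 4) (hsc : dist (φ s c) c ≤ ρ / 4) :
    ∀ᶠ y in 𝓝 (φ s c), φ 0 y = y ∧
      ∀ σ ∈ uIcc 0 (-s), HasDerivAt (φ · y) (V (φ σ y)) σ ∧ φ σ y ∈ closedBall c ρ := by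
  filter_upwards [closedBall_mem_nhds (φ s c) (by positivity : 0 < ρ / 4)] with y hy
  have hyc : dist y c ≤ ρ / 2 := by linarith [dist_triangle y (φ s c) c, mem_closedBall.1 hy]
  have hφy : ∀ σ ∈ uIcc 0 (-s), HasDerivAt (φ · y) (V (φ σ y)) σ := fun σ hσ =>
    hderiv σ ((abs_le_abs_of_mem_uIcc_zero hσ).trans_lt (by rwa [abs_neg]))
      y (mem_closedBall.2 (by linarith))
  refine ⟨hinit y, fun σ hσ => ⟨hφy σ hσ, ?_⟩⟩
  refine mem_closedBall_of_norm_deriv_lt (δ := ρ / 2) hC₀ hφy (by rwa [hinit, mem_closedBall])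
    (fun τ _ hτ => hC _ hτ) ?_ σ hσ
  rw [abs_neg]
  linarith

theorem hasDerivAt_fderiv_flow_neg [ProperSpace E] {V : E → E} {φ : ℝ → E → E} {c : E}
    {ρ ε₁ : ℝ} (hρ : 0 < ρ) (hε₁ : 0 < ε₁)
    (hV : ∀ x ∈ closedBall c ρ, HasFDerivAt V (fderiv ℝ V x) x)
    (hV' : ContinuousOn (fderiv ℝ V) (closedBall c ρ)) (hinit : ∀ y, φ 0 y = y)
    (hderiv : ∀ σ, |σ| < ε₁ → ∀ y ∈ closedBall c ρ, HasDerivAt (φ · y) (V (φ σ y)) σ)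
    (hgroup : ∀ s σ, |s| < ε₁ → |σ| < ε₁ → φ s c ∈ closedBall c ρ → φ σ (φ s c) = φ (σ + s) c) :
    HasDerivAt (fun s => fderiv ℝ (φ (-s)) (φ s c)) (-fderiv ℝ V c) 0 := by
  have hcc : c ∈ closedBall c ρ := mem_closedBall_self hρ.le
  obtain ⟨C, hC⟩ := exists_nnnorm_le_of_isCompact (isCompact_closedBall c ρ)
    fun x hx => (hV x hx).continuousAt.continuousWithinAt
  have hC' : ∀ x ∈ closedBall c ρ, ‖V x‖ < C + 1 := fun x hx => by
    have := hC x hx; rw [← NNReal.coe_le_coe, coe_nnnorm] at this; linarith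
  obtain ⟨ε, hε, hgood⟩ := exists_pos_short_time_of_continuousAt (C := C + 1)
    (hderiv 0 (by simpa using hε₁) c hcc).continuousAt hε₁ (by positivity : 0 < ρ / 4)
  simp only [hinit] at hgood
  have hA : ContinuousOn (fun σ => fderiv ℝ V (φ σ c)) (Icc (-(ε / 2)) (ε / 2)) := by
    refine hV'.comp (fun σ hσ => ?_) fun σ hσ => ?_
    all_goals have hσ' := hgood σ ((abs_le.2 hσ).trans_lt (by linarith))
    · exact (hderiv σ hσ'.1 c hcc).continuousAt.continuousWithinAt
    · exact mem_closedBall.2 (hσ'.2.2.trans (by linarith))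
  obtain ⟨ε', ⟨hε', hε'ε⟩, M, hM0, hM⟩ := exists_hasDerivAt_eq_mul (by positivity) hA
  have hinv : ∀ᶠ s in 𝓝 0, fderiv ℝ (φ (-s)) (φ s c) = Ring.inverse (M s) := by
    have hunit : ∀ᶠ s in 𝓝 0, IsUnit (M s) :=
      (hM 0 ⟨by linarith, hε'⟩).continuousAt.preimage_mem_nhds
        (Units.isOpen.mem_nhds (by simp [hM0]))
    filter_upwards [hunit, Ioo_mem_nhds (neg_lt_zero.2 hε') hε'] with s hs hsε
    have hsε' : |s| < ε' := abs_lt.2 hsε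
    have hσs {σ} (hσ : σ ∈ uIcc 0 (-s)) : |σ| < ε' :=
      (abs_le_abs_of_mem_uIcc_zero hσ).trans_lt (by rwa [abs_neg])
    obtain ⟨hsε₁, hCs, hsc⟩ := hgood s (by linarith)
    refine (hasFDerivAt_flow_neg (isCompact_closedBall c ρ) (convex_closedBall c ρ) hV hV'
      (eventually_flow_mem_closedBall hinit hderiv hρ (by positivity) hC' hsε₁ hCs hsc)
      (fun σ hσ => hgroup s σ hsε₁ (hgood σ (by linarith [hσs hσ])).1
        (mem_closedBall.2 (by linarith))) hM0 hs fun σ hσ => hM σ (abs_lt.1 ?_)).fderiv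
    exact (abs_le_abs_of_mem_uIcc_zero (uIcc_comm s 0 ▸ hσ)).trans_lt hsε'
  refine HasDerivAt.congr_of_eventuallyEq (hasDerivAt_ringInverse_of_eq_one ?_ hM0) hinv
  simpa [hinit, hM0] using hM 0 ⟨by linarith, hε'⟩

end FlowDerivative

lemma fderiv_apply_eq_sum_pd (f : Vec n → ℝ) (x v : Vec n) :
    fderiv ℝ f x v = ∑ l, v l * pd l f x := by
  conv_lhs => rw [← Finset.univ_sum_single v]
  simp only [map_sum]
  refine Finset.sum_congr rfl fun l _ => ?_
  rw [pd, ← smul_eq_mul, ← map_smul, ← Pi.single_smul, smul_eq_mul, mul_one]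

lemma IsSpray.fderiv_apply_fst {U : Set (Vec n)} (hU : IsOpen U)
    {Pb : Vec n → Fin n → Fin n → ℝ} (hPb : ∀ p q, ContDiffOn ℝ (⊤ : ℕ∞) (fun x => Pb x p q) U)
    {V : Pt n → Pt n} (hV : IsSpray U Pb V) {c : Pt n} (hc : c.1 ∈ U) (w : Pt n) (r : Fin n) :
    (fderiv ℝ V c w).1 r
      = sharp Pb c.1 w.2 r + ∑ p, ∑ q, c.2 p * w.1 q * pd q (fun y => Pb y p r) c.1 := by
  have hcO : U ×ˢ univ ∈ 𝓝 c := (hU.prod isOpen_univ).mem_nhds ⟨hc, mem_univ _⟩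
  have hPbd (p : Fin n) : HasFDerivAt (fun y => Pb y p r) (fderiv ℝ (fun y => Pb y p r) c.1) c.1 :=
    (((hPb p r).contDiffAt (hU.mem_nhds hc)).differentiableAt (by simp)).hasFDerivAt
  set ℓ : Pt n →L[ℝ] ℝ := (ContinuousLinearMap.proj r).comp (ContinuousLinearMap.fst ℝ _ _)
  have hbase : (fun η => ℓ (V η)) =ᶠ[𝓝 c] fun η => ∑ p, Pb η.1 p r * η.2 p := by
    filter_upwards [hcO] with η hη
    simp [ℓ, hV.base η hη.1, sharp]
  have hVd := ((hV.smooth.contDiffAt hcO).differentiableAt (by simp)).hasFDerivAt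
  have hG := HasFDerivAt.fun_sum (u := Finset.univ) fun p _ =>
    ((hPbd p).comp c hasFDerivAt_fst).mul
      ((ContinuousLinearMap.proj (R := ℝ) (φ := fun _ : Fin n => ℝ) p).hasFDerivAt.comp c
        hasFDerivAt_snd)
  have := congrArg (· w) ((ℓ.hasFDerivAt.comp c hVd).congr_of_eventuallyEq hbase.symm |>.unique hG)
  refine this.trans ?_
  simp [sharp, fderiv_apply_eq_sum_pd, Finset.sum_add_distrib, Finset.mul_sum, mul_comm,
    mul_left_comm, mul_assoc]

/-- The fibre component of the horizontal lift `(v, horLift Γ ξ v)` of `v` at `ξ`. -/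
def horLift (Γ : Vec n → Fin n → Fin n → Fin n → ℝ) (ξ : Pt n) (v : Vec n) : Vec n :=
  fun q => ∑ p, ∑ r, Γ ξ.1 p q r * v p * ξ.2 r

lemma sharp_sub (Pb : Vec n → Fin n → Fin n → ℝ) (x a b : Vec n) :
    sharp Pb x (a - b) = sharp Pb x a - sharp Pb x b := by
  ext q
  simp [sharp, mul_sub, Finset.sum_sub_distrib]

lemma sharp_zero (Pb : Vec n → Fin n → Fin n → ℝ) (x : Vec n) : sharp Pb x 0 = 0 := by
  ext q
  simp [sharp]

lemma vert_eq_sub_horLift (Γ : Vec n → Fin n → Fin n → Fin n → ℝ) (ξ v : Pt n) :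
    vert Γ ξ v = v.2 - horLift Γ ξ v.1 :=
  rfl

lemma vert_eq_zero_of_mem_Hor {Γ : Vec n → Fin n → Fin n → Fin n → ℝ} {ξ v : Pt n}
    (hv : v ∈ Hor Γ ξ) : vert Γ ξ v = 0 := by
  ext q
  simp [vert, hv q]

lemma covAlong_GbarTM_apply (Pb : Vec n → Fin n → Fin n → ℝ)
    (Γ : Vec n → Fin n → Fin n → Fin n → ℝ) (a γ u : ℝ → Vec n) (t : ℝ) (r : Fin n) :
    covAlong (GbarTM Pb Γ) a γ u t r = deriv (fun s => u s r) t
      - sharp Pb (γ t) (horLift Γ (γ t, a t) (u t)) r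
      - ∑ p, ∑ q, a t p * u t q * pd q (fun y => Pb y p r) (γ t) := by
  have hΓ : ∑ p, ∑ q, a t p * u t q * ∑ s, Pb (γ t) s r * Γ (γ t) q s p
      = sharp Pb (γ t) (horLift Γ (γ t, a t) (u t)) r := by
    simp only [sharp, horLift, Finset.mul_sum]
    rw [Finset.sum_comm, Finset.sum_congr rfl fun q _ => Finset.sum_comm, Finset.sum_comm]
    exact Finset.sum_congr rfl fun s _ => Finset.sum_congr rfl fun q _ =>
      Finset.sum_congr rfl fun p _ => by ring
  simp only [covAlong, GbarTM, mul_sub, mul_neg, Finset.sum_sub_distrib, Finset.sum_neg_distrib]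
  rw [← hΓ]
  ring

lemma IsLocalFlow.exists_pos_forall_mem_dom {U : Set (Vec n)} {V : Pt n → Pt n}
    {D : Set (ℝ × Pt n)} {φ : ℝ → Pt n → Pt n} (hφ : IsLocalFlow U V D φ) {c : Pt n}
    (hc : c.1 ∈ U) : ∃ ε > 0, ∀ s y, |s| < ε → dist y c < ε → (s, y) ∈ D := by
  obtain ⟨ε, hε, hsub⟩ := Metric.isOpen_iff.1 hφ.isOpen_dom (0, c) (hφ.mem_zero c hc)
  refine ⟨ε, hε, fun s y hs hy => hsub ?_⟩
  rw [← ball_prod_same]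
  exact ⟨by simpa using hs, hy⟩

lemma IsLocalFlow.hasDerivAt_fderiv_neg {U : Set (Vec n)} (hU : IsOpen U) {V : Pt n → Pt n}
    (hV : ContDiffOn ℝ (⊤ : ℕ∞) V (U ×ˢ univ)) {D : Set (ℝ × Pt n)} {φ : ℝ → Pt n → Pt n}
    (hφ : IsLocalFlow U V D φ) {c : Pt n} (hc : c.1 ∈ U) :
    HasDerivAt (fun s => fderiv ℝ (φ (-s)) (φ s c)) (-fderiv ℝ V c) 0 := by
  have hO : IsOpen (U ×ˢ univ : Set (Pt n)) := hU.prod isOpen_univ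
  have hV1 : ContDiffOn ℝ 1 V (U ×ˢ univ) := hV.of_le (by simp)
  obtain ⟨ε, hε, hbox⟩ := hφ.exists_pos_forall_mem_dom hc
  obtain ⟨ρ, hρ, hρsub⟩ := nhds_basis_closedBall.mem_iff.1
    (inter_mem (hO.mem_nhds ⟨hc, mem_univ c.2⟩) (ball_mem_nhds c hε))
  refine hasDerivAt_fderiv_flow_neg hρ hε (fun x hx => ?_)
    ((hV1.continuousOn_fderiv_of_isOpen hO le_rfl).mono fun x hx => (hρsub hx).1) hφ.init
    (fun σ hσ y hy => hφ.hasDeriv σ y (hbox σ y hσ (hρsub hy).2))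
    (fun s σ hs hσ hsc => (hφ.group σ s c (hbox s c hs (by simpa using hε))
      (hbox σ _ hσ (hρsub hsc).2)).2)
  exact ((hV1.differentiableOn one_ne_zero x (hρsub hx).1).differentiableAt
    (hO.mem_nhds (hρsub hx).1)).hasFDerivAt

lemma IsLocalFlow.hasDerivAt_pullback {U : Set (Vec n)} (hU : IsOpen U) {V : Pt n → Pt n}
    (hV : ContDiffOn ℝ (⊤ : ℕ∞) V (U ×ˢ univ)) {D : Set (ℝ × Pt n)} {φ : ℝ → Pt n → Pt n}
    (hφ : IsLocalFlow U V D φ) {ξ : Pt n} {t : ℝ} (htD : (t, ξ) ∈ D) {W : ℝ → Pt n}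
    (hW : DifferentiableAt ℝ W t) :
    HasDerivAt (fun s => fderiv ℝ (φ (-s)) (φ (t + s) ξ) (W (t + s)))
      (deriv W t - fderiv ℝ V (φ t ξ) (W t)) 0 := by
  have hc := hφ.invariant t ξ htD
  have hgroup : ∀ᶠ s in 𝓝 (0 : ℝ), φ (t + s) ξ = φ s (φ t ξ) := by
    obtain ⟨ε, hε, hbox⟩ := hφ.exists_pos_forall_mem_dom hc
    filter_upwards [Ioo_mem_nhds (neg_lt_zero.2 hε) hε] with s hs
    rw [add_comm]
    exact (hφ.group s t ξ htD (hbox s _ (abs_lt.2 hs) (by simpa using hε))).2.symm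
  have hWt : HasDerivAt (fun s => W (t + s)) (deriv W t) 0 :=
    HasDerivAt.comp_const_add t 0 (by simpa using hW.hasDerivAt)
  refine (((hφ.hasDerivAt_fderiv_neg hU hV hc).clm_apply hWt).congr_of_eventuallyEq ?_).congr_deriv
    ?_
  · filter_upwards [hgroup] with s hs
    rw [hs]
  · simp [show φ 0 = id from funext hφ.init, sub_eq_neg_add]

lemma IsSpray.deriv_pullback_fst {U : Set (Vec n)} (hU : IsOpen U)
    {Pb : Vec n → Fin n → Fin n → ℝ} (hPb : ∀ p q, ContDiffOn ℝ (⊤ : ℕ∞) (fun x => Pb x p q) U)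
    {V : Pt n → Pt n} (hV : IsSpray U Pb V) {D : Set (ℝ × Pt n)} {φ : ℝ → Pt n → Pt n}
    (hφ : IsLocalFlow U V D φ) (Γ : Vec n → Fin n → Fin n → Fin n → ℝ) {ξ : Pt n} {t : ℝ}
    (htD : (t, ξ) ∈ D) {W : ℝ → Pt n} (hW : DifferentiableAt ℝ W t) :
    deriv (fun s => (fderiv ℝ (φ (-s)) (φ (t + s) ξ) (W (t + s))).1) 0
      = -sharp Pb ((φ t ξ).1) (vert Γ (φ t ξ) (W t))
        + covAlong (GbarTM Pb Γ) (fun s => (φ s ξ).2) (fun s => (φ s ξ).1)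
            (fun s => (W s).1) t := by
  have hfst : HasDerivAt (fun s => (fderiv ℝ (φ (-s)) (φ (t + s) ξ) (W (t + s))).1)
      (deriv W t - fderiv ℝ V (φ t ξ) (W t)).1 0 :=
    (ContinuousLinearMap.fst ℝ (Vec n) (Vec n)).hasFDerivAt.comp_hasDerivAt 0
      (hφ.hasDerivAt_pullback hU hV.smooth htD hW)
  rw [hfst.deriv]
  ext r
  have hWr : HasDerivAt (fun s => (W s).1 r) ((deriv W t).1 r) t :=
    ((ContinuousLinearMap.proj r).comp (ContinuousLinearMap.fst ℝ (Vec n) (Vec n))).hasFDerivAt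
      |>.comp_hasDerivAt t hW.hasDerivAt
  simp only [Prod.fst_sub, Pi.sub_apply, Pi.add_apply, Pi.neg_apply,
    hV.fderiv_apply_fst hU hPb (hφ.invariant t ξ htD), covAlong_GbarTM_apply, hWr.deriv,
    vert_eq_sub_horLift, sharp_sub, Prod.mk.eta]
  ring

theorem lie_derivative_projection_formula_general
    {n : ℕ} (U : Set (Vec n)) (hU : IsOpen U)
    (Pb : Vec n → Fin n → Fin n → ℝ) (hPb : IsPoissonOn U Pb)
    (V : Pt n → Pt n) (hV : IsSpray U Pb V)
    (D : Set (ℝ × Pt n)) (φ : ℝ → Pt n → Pt n) (hφ : IsLocalFlow U V D φ)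
    (Γ : Vec n → Fin n → Fin n → Fin n → ℝ)
    (ξ : Pt n) (hξ : ∀ t ∈ Icc (0:ℝ) 1, (t, ξ) ∈ D)
    (W : ℝ → Pt n) (hW : Differentiable ℝ W) :
    (∀ t ∈ Icc (0:ℝ) 1, (∀ s : ℝ, W s ∈ Hor Γ (φ s ξ)) →
      deriv (fun s => (fderiv ℝ (φ (-s)) (φ (t + s) ξ) (W (t + s))).1) 0
        = covAlong (GbarTM Pb Γ) (fun s => (φ s ξ).2) (fun s => (φ s ξ).1)
            (fun s => (W s).1) t) ∧
    (∀ t ∈ Icc (0:ℝ) 1,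
      deriv (fun s => (fderiv ℝ (φ (-s)) (φ (t + s) ξ) (W (t + s))).1) 0
        = -sharp Pb ((φ t ξ).1) (vert Γ (φ t ξ) (W t))
          + covAlong (GbarTM Pb Γ) (fun s => (φ s ξ).2) (fun s => (φ s ξ).1)
              (fun s => (W s).1) t) := by
  have hformula (t) (ht : t ∈ Icc (0:ℝ) 1) :=
    hV.deriv_pullback_fst hU hPb.1.1 hφ Γ (hξ t ht) (hW t)
  refine ⟨fun t ht hHor => ?_, hformula⟩
  rw [hformula t ht, vert_eq_zero_of_mem_Hor (hHor t), sharp_zero, neg_zero, zero_add]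

/-- Along `a(t) = φ_t(ξ)`: for a horizontal tangent vector field `W` along `a`
(with respect to the torsion-free classical connection `Γ`),
`dp(L_{V_π}(W)) = ∇̄_a(W̄)`, where `W̄ = (dp)(W)` and `∇̄` is the contravariant
connection on `TM` induced by `Γ`.  Consequently, for an arbitrary tangent
vector field `W` along `a` with components `(W̄, θ_W)`,
`dp(L_{V_π}(W)) = −π♯(θ_W) + ∇̄_a(W̄)`. -/
theorem lie_derivative_projection_formula
    {n : ℕ} (U : Set (Vec n)) (hU : IsOpen U)
    (Pb : Vec n → Fin n → Fin n → ℝ) (hPb : IsPoissonOn U Pb)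
    (V : Pt n → Pt n) (hV : IsSpray U Pb V)
    (D : Set (ℝ × Pt n)) (φ : ℝ → Pt n → Pt n) (hφ : IsLocalFlow U V D φ)
    (Γ : Vec n → Fin n → Fin n → Fin n → ℝ)
    (hΓsym : ∀ x p q r, Γ x q p r = Γ x p q r)  -- torsion-free
    (hΓ : ∀ p q r, ContDiffOn ℝ (⊤ : ℕ∞) (fun x => Γ x p q r) U)
    (ξ : Pt n) (hξ : ∀ t ∈ Icc (0:ℝ) 1, (t, ξ) ∈ D)
    (W : ℝ → Pt n) (hW : Differentiable ℝ W) :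
    (∀ t ∈ Icc (0:ℝ) 1, (∀ s : ℝ, W s ∈ Hor Γ (φ s ξ)) →
      deriv (fun s => (fderiv ℝ (φ (-s)) (φ (t + s) ξ) (W (t + s))).1) 0
        = covAlong (GbarTM Pb Γ) (fun s => (φ s ξ).2) (fun s => (φ s ξ).1)
            (fun s => (W s).1) t) ∧
    (∀ t ∈ Icc (0:ℝ) 1,
      deriv (fun s => (fderiv ℝ (φ (-s)) (φ (t + s) ξ) (W (t + s))).1) 0
        = -sharp Pb ((φ t ξ).1) (vert Γ (φ t ξ) (W t))
          + covAlong (GbarTM Pb Γ) (fun s => (φ s ξ).2) (fun s => (φ s ξ).1)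
              (fun s => (W s).1) t) :=
  lie_derivative_projection_formula_general U hU Pb hPb V hV D φ hφ Γ ξ hξ W hW

end PoissonPaper
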